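/- arXiv:2208.02937 — 4 statements merged into one kernel-verified Lean document; each statement's English description precedes it below -/
import Mathlib

section
/- Fix d ≥ 1 and δ ∈ (0,1], set a := δ 2^{−2d−1}/(d+1), and define w: ℝ^d → (0,∞) by w(ξ) = a if |ξ|_∞ < 1/2 and w(ξ) = |ξ|_∞^{d+1} if |ξ|_∞ ≥ 1/2. Then for every ξ ∈ ℝ^d, w(ξ) · ∑_{ℓ ∈ ℤ^d, ℓ ≠ 0} 1/w(ξ − ℓ) ≤ δ + 2^{2d+2}(d+1) δ^{−1} |ξ|_∞^{d+1} 1_{|ξ|_∞ ≥ 1/2}. -/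
-- MVT-type: b^(n+1) - a^(n+1) ≤ (n+1) b^n (b-a)
lemma my_pow_sub_pow_le (n : ℕ) {a b : ℝ} (ha : 0 ≤ a) (hab : a ≤ b) :
    b ^ (n + 1) - a ^ (n + 1) ≤ (n + 1) * b ^ n * (b - a) := by
  induction n with
  | zero => simp
  | succ n ih =>
    have hb : 0 ≤ b := ha.trans hab
    have h1 : b ^ (n + 2) - a ^ (n + 2) = b * (b ^ (n+1) - a ^ (n+1)) + a ^ (n+1) * (b - a) := by
      ring
    rw [h1]
    have h2 : b * (b ^ (n+1) - a ^ (n+1)) ≤ b * ((n + 1) * b ^ n * (b - a)) := by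
      apply mul_le_mul_of_nonneg_left ih hb
    have h3 : a ^ (n+1) * (b - a) ≤ b ^ (n+1) * (b - a) := by
      apply mul_le_mul_of_nonneg_right (pow_le_pow_left₀ ha hab _) (by linarith)
    have h4 : b * ((n + 1 : ℝ) * b ^ n * (b - a)) = ((n:ℝ) + 1) * b ^ (n+1) * (b - a) := by ring
    push_cast
    linarith

-- telescoping
lemma my_tele (g : ℕ → ℝ) : ∀ m n : ℕ, m ≤ n →
    ∑ j ∈ Finset.Ico m n, (g j - g (j + 1)) = g m - g n := by
  intro m n h
  induction n with
  | zero => interval_cases m; simp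
  | succ n ih =>
    rcases Nat.lt_or_ge m (n+1) with h'|h'
    · have hmn : m ≤ n := by omega
      rw [Finset.sum_Ico_succ_top hmn, ih hmn]; ring
    · have : m = n + 1 := by omega
      subst this; simp


-- counting: lattice points in a box of side n
lemma my_count {d n : ℕ} (ξ : Fin d → ℝ) (s : Finset (Fin d → ℤ))
    (hs : ∀ ℓ ∈ s, ∀ i, |ξ i - (ℓ i : ℝ)| < n / 2) : s.card ≤ n ^ d := by
  classical
  have key : s.card ≤ (Fintype.piFinset fun _ : Fin d => Finset.Ico (0:ℤ) n).card := by
    apply Finset.card_le_card_of_injOn (fun ℓ i => ℓ i - ⌈ξ i - n / 2⌉)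
    · intro ℓ hℓ
      rw [Finset.mem_coe, Fintype.mem_piFinset]
      intro i
      have h := hs ℓ hℓ i
      rw [abs_lt] at h
      rw [Finset.mem_Ico]
      constructor
      · rw [sub_nonneg, Int.ceil_le]
        push_cast
        linarith [h.2]
      · have hup : ((ℓ i - ⌈ξ i - n / 2⌉ : ℤ) : ℝ) < n := by
          push_cast
          have := Int.le_ceil (ξ i - n / 2)
          linarith [h.1]
        exact_mod_cast hup
    · intro ℓ₁ _ ℓ₂ _ h
      funext i
      have := congrFun h i
      simpa using this
  calc s.card ≤ _ := key
    _ = n ^ d := by simp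
lemma my_AJ {d : ℕ} (hd : 1 ≤ d) : ∀ J : ℕ, 1 ≤ J →
    ((J:ℝ)+1)^d * (2/(J:ℝ))^(d+1)
      + ∑ j ∈ Finset.Ico 1 J, ((j:ℝ)+1)^d * ((2/(j:ℝ))^(d+1) - (2/((j:ℝ)+1))^(d+1))
      ≤ 2^(2*d+1)*((d:ℝ)+1) - 2^(2*d+1)*(d:ℝ)/(J:ℝ) := by
  intro J hJle
  induction J, hJle using Nat.le_induction with
  | base =>
    rw [Finset.Ico_self, Finset.sum_empty]
    have h2 : (((1:ℕ):ℝ)+1)^d * (2/((1:ℕ):ℝ))^(d+1) = 2^(2*d+1) := by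
      push_cast
      norm_num
      rw [← pow_add]
      congr 1
      omega
    rw [h2]
    push_cast
    have : (2:ℝ)^(2*d+1)*((d:ℝ)+1) - 2^(2*d+1)*(d:ℝ)/1 = 2^(2*d+1) := by ring
    linarith
  | succ J hJ ih =>
    obtain ⟨e, rfl⟩ : ∃ e, d = e + 1 := ⟨d-1, by omega⟩
    rw [Finset.sum_Ico_succ_top hJ]
    push_cast at ih ⊢
    set S : ℝ := ∑ j ∈ Finset.Ico 1 J, ((j:ℝ)+1)^(e+1) * ((2/(j:ℝ))^(e+1+1) - (2/((j:ℝ)+1))^(e+1+1)) with hS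
    set y : ℝ := (J:ℝ) with hy
    have hy1 : (1:ℝ) ≤ y := by rw [hy]; exact_mod_cast hJ
    set x : ℝ := y + 1 with hx
    clear_value S y x
    have hx2 : (2:ℝ) ≤ x := by linarith
    have hx0 : (0:ℝ) < x := by linarith
    have hy0 : (0:ℝ) < y := by linarith
    -- key increment bound
    have step1 : (x+1)^(e+1) - x^(e+1) ≤ ((e:ℝ)+1) * ((3/2)^e * x^e) := by
      have hp := my_pow_sub_pow_le e (by linarith : (0:ℝ) ≤ x) (by linarith : x ≤ x+1)
      have h2 : (x+1)^e ≤ (3/2)^e * x^e := by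
        rw [← mul_pow]
        exact pow_le_pow_left₀ (by linarith) (by linarith) e
      have h1 : ((e:ℝ)+1) * (x+1)^e * (x + 1 - x) = ((e:ℝ)+1) * (x+1)^e := by ring
      push_cast at hp
      rw [h1] at hp
      have := mul_le_mul_of_nonneg_left h2 (by positivity : (0:ℝ) ≤ (e:ℝ)+1)
      linarith
    have step3 : ((e:ℝ)+1) * ((3/2)^e * x^e) * (2/x)^(e+1+1)
        = 4*((e:ℝ)+1)*3^e / x^2 := by
      have hxne : x ≠ 0 := ne_of_gt hx0
      have h32 : ((3:ℝ)/2)^e = 3^e/2^e := div_pow 3 2 e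
      have hdp : ((2:ℝ)/x)^(e+1+1) = 2^(e+1+1)/x^(e+1+1) := div_pow 2 x (e+1+1)
      rw [h32, hdp, show x^(e+1+1) = x^e*x^2 by ring,
        show (2:ℝ)^(e+1+1) = 2^e*4 by ring]
      field_simp
    have step4 : 4*((e:ℝ)+1)*3^e / x^2 ≤ 2^(2*(e+1)+1)*((e:ℝ)+1)/((x-1)*x) := by
      have h1 : (2:ℝ)^e * (2:ℝ)^e = 4^e := by rw [← mul_pow]; norm_num
      have hC : (2:ℝ)^(2*(e+1)+1) = 8 * 4^e := by
        rw [show 2*(e+1)+1 = e+(e+3) by omega, pow_add, pow_add,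
          show (2:ℝ)^3 = 8 by norm_num]
        linear_combination 8 * h1
      rw [hC]
      have h34 : (3:ℝ)^e ≤ 4^e := pow_le_pow_left₀ (by norm_num) (by norm_num) e
      have h4p : (0:ℝ) < 4^e := by positivity
      have hd1 : (0:ℝ) < (x-1)*x := by nlinarith
      have hdx : (x-1)*x ≤ x^2 := by nlinarith
      apply div_le_div₀ (by nlinarith) (by nlinarith) hd1 hdx
    have h5 : ((x+1)^(e+1) - x^(e+1)) * (2/x)^(e+1+1)
        ≤ 2^(2*(e+1)+1)*((e:ℝ)+1)/((x-1)*x) := by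
      calc ((x+1)^(e+1) - x^(e+1)) * (2/x)^(e+1+1)
          ≤ ((e:ℝ)+1) * ((3/2)^e * x^e) * (2/x)^(e+1+1) := by
            apply mul_le_mul_of_nonneg_right step1 (by positivity)
        _ = 4*((e:ℝ)+1)*3^e / x^2 := step3
        _ ≤ _ := step4
    have hdiff : 2^(2*(e+1)+1)*((e:ℝ)+1)/y - 2^(2*(e+1)+1)*((e:ℝ)+1)/x
        = 2^(2*(e+1)+1)*((e:ℝ)+1)/((x-1)*x) := by
      have hx1 : x - 1 = y := by rw [hx]; ring
      rw [hx1, hx]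
      field_simp
      ring
    have key : (x+1)^(e+1) * (2/x)^(e+1+1) + (S + x^(e+1)*((2/y)^(e+1+1) - (2/x)^(e+1+1)))
        = (x^(e+1) * (2/y)^(e+1+1) + S) + ((x+1)^(e+1) - x^(e+1)) * (2/x)^(e+1+1) := by
      ring
    linarith [ih, h5, hdiff, key]

lemma my_lattice {d : ℕ} (hd : 1 ≤ d) (ξ : Fin d → ℝ) (s : Finset (Fin d → ℤ))
    (hs : ∀ ℓ ∈ s, (1:ℝ)/2 ≤ ‖ξ - fun i => ((ℓ i : ℝ))‖) :
    ∑ ℓ ∈ s, 1/‖ξ - fun i => ((ℓ i : ℝ))‖^(d+1) ≤ 2^(2*d+1)*((d:ℝ)+1) := by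
  classical
  set ν : (Fin d → ℤ) → ℝ := fun ℓ => ‖ξ - fun i => ((ℓ i : ℝ))‖ with hν
  set j₀ : (Fin d → ℤ) → ℕ := fun ℓ => ⌊2 * ν ℓ⌋₊ with hj₀
  set J : ℕ := s.sup j₀ + 1 with hJdef
  have hJ1 : 1 ≤ J := by omega
  set g : ℕ → ℝ := fun j => (2/(j:ℝ))^(d+1) with hg
  -- basic facts for ℓ ∈ s
  have hν0 : ∀ ℓ ∈ s, (0:ℝ) < ν ℓ := fun ℓ hℓ => lt_of_lt_of_le (by norm_num) (hs ℓ hℓ)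
  have hj₀1 : ∀ ℓ ∈ s, 1 ≤ j₀ ℓ := by
    intro ℓ hℓ
    apply Nat.le_floor
    have := hs ℓ hℓ
    push_cast
    linarith
  have hj₀J : ∀ ℓ ∈ s, j₀ ℓ ≤ J := by
    intro ℓ hℓ
    exact le_trans (Finset.le_sup hℓ) (by omega)
  have hcoord : ∀ (j : ℕ), ∀ ℓ ∈ s, j₀ ℓ ≤ j → ∀ i, |ξ i - (ℓ i : ℝ)| < ((j+1:ℕ):ℝ) / 2 := by
    intro j ℓ hℓ hle i
    have h2ν : 2 * ν ℓ < ((j:ℝ) + 1) := by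
      have : j₀ ℓ < j + 1 := by omega
      rw [hj₀] at this
      simp only at this
      have h0 : (0:ℝ) ≤ 2 * ν ℓ := by linarith [hν0 ℓ hℓ]
      exact_mod_cast (Nat.floor_lt h0).mp this
    have hi : |ξ i - (ℓ i : ℝ)| ≤ ν ℓ := by
      have := norm_le_pi_norm (ξ - fun i => ((ℓ i : ℝ))) i
      simpa [Real.norm_eq_abs] using this
    push_cast
    linarith
  -- per term bound
  have hterm : ∀ ℓ ∈ s, 1/(ν ℓ)^(d+1) ≤ g (j₀ ℓ) := by
    intro ℓ hℓ
    have h1 : ((j₀ ℓ : ℝ))/2 ≤ ν ℓ := by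
      have := Nat.floor_le (by linarith [hν0 ℓ hℓ] : (0:ℝ) ≤ 2 * ν ℓ)
      rw [hj₀]; simp only
      linarith
    have hj0pos : (0:ℝ) < (j₀ ℓ : ℝ) := by
      exact_mod_cast Nat.lt_of_lt_of_le Nat.zero_lt_one (hj₀1 ℓ hℓ)
    have h2 : (0:ℝ) < ((j₀ ℓ : ℝ))/2 := by linarith
    have h3 : (((j₀ ℓ : ℝ))/2)^(d+1) ≤ (ν ℓ)^(d+1) := pow_le_pow_left₀ (by linarith) h1 _
    have h4 : 1/(ν ℓ)^(d+1) ≤ 1/(((j₀ ℓ : ℝ))/2)^(d+1) :=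
      one_div_le_one_div_of_le (by positivity) h3
    calc 1/(ν ℓ)^(d+1) ≤ 1/(((j₀ ℓ : ℝ))/2)^(d+1) := h4
      _ = g (j₀ ℓ) := by
          rw [hg]
          simp only
          rw [← one_div_pow, one_div_div]
  -- telescoping per term
  have htele : ∀ ℓ ∈ s, g (j₀ ℓ) = g J
      + ∑ j ∈ Finset.Ico 1 J, (if j₀ ℓ ≤ j then (g j - g (j+1)) else 0) := by
    intro ℓ hℓ
    have e1 : ∑ j ∈ Finset.Ico 1 J, (if j₀ ℓ ≤ j then (g j - g (j+1)) else 0)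
        = ∑ j ∈ Finset.Ico (j₀ ℓ) J, (g j - g (j+1)) := by
      rw [← Finset.sum_filter]
      congr 1
      ext k
      simp only [Finset.mem_filter, Finset.mem_Ico]
      have := hj₀1 ℓ hℓ
      omega
    rw [e1, my_tele g _ _ (hj₀J ℓ hℓ)]
    ring
  -- main chain
  have hΔ : ∀ j ∈ Finset.Ico 1 J, (0:ℝ) ≤ g j - g (j+1) := by
    intro j hj
    rw [Finset.mem_Ico] at hj
    have hj1 : (1:ℝ) ≤ (j:ℝ) := by exact_mod_cast hj.1
    rw [hg]; simp only
    have : (2:ℝ)/((j:ℝ)+1) ≤ 2/(j:ℝ) := by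
      apply div_le_div_of_nonneg_left (by norm_num) (by linarith) (by push_cast; linarith)
    have := pow_le_pow_left₀ (by positivity) this (d+1)
    push_cast at this ⊢
    linarith
  have hcard : ∀ j : ℕ, ((s.filter (fun ℓ => j₀ ℓ ≤ j)).card : ℝ) ≤ ((j:ℝ)+1)^d := by
    intro j
    have := my_count ξ (s.filter (fun ℓ => j₀ ℓ ≤ j)) (by
      intro ℓ hℓ i
      rw [Finset.mem_filter] at hℓ
      exact hcoord j ℓ hℓ.1 hℓ.2 i)
    calc ((s.filter (fun ℓ => j₀ ℓ ≤ j)).card : ℝ) ≤ (((j+1)^d : ℕ) : ℝ) := by exact_mod_cast this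
      _ = ((j:ℝ)+1)^d := by push_cast; ring
  have hscard : ((s.card : ℝ)) ≤ ((J:ℝ)+1)^d := by
    have hfull : s.filter (fun ℓ => j₀ ℓ ≤ J) = s := by
      apply Finset.filter_true_of_mem
      exact hj₀J
    have := hcard J
    rw [hfull] at this
    exact this
  have hgJ : (0:ℝ) ≤ g J := by rw [hg]; positivity
  calc ∑ ℓ ∈ s, 1/‖ξ - fun i => ((ℓ i : ℝ))‖^(d+1)
      ≤ ∑ ℓ ∈ s, (g J + ∑ j ∈ Finset.Ico 1 J, (if j₀ ℓ ≤ j then (g j - g (j+1)) else 0)) := by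
        apply Finset.sum_le_sum
        intro ℓ hℓ
        rw [← htele ℓ hℓ]
        exact hterm ℓ hℓ
    _ = (s.card : ℝ) * g J + ∑ j ∈ Finset.Ico 1 J,
          ((s.filter (fun ℓ => j₀ ℓ ≤ j)).card : ℝ) * (g j - g (j+1)) := by
        rw [Finset.sum_add_distrib, Finset.sum_const, nsmul_eq_mul, Finset.sum_comm]
        congr 1
        apply Finset.sum_congr rfl
        intro j _
        rw [← Finset.sum_filter, Finset.sum_const, nsmul_eq_mul]
    _ ≤ ((J:ℝ)+1)^d * g J + ∑ j ∈ Finset.Ico 1 J, ((j:ℝ)+1)^d * (g j - g (j+1)) := by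
        apply add_le_add (mul_le_mul_of_nonneg_right hscard hgJ)
        apply Finset.sum_le_sum
        intro j hj
        exact mul_le_mul_of_nonneg_right (hcard j) (hΔ j hj)
    _ ≤ 2^(2*d+1)*((d:ℝ)+1) := by
        have hAJ := my_AJ hd J hJ1
        have hpos : (0:ℝ) ≤ 2^(2*d+1)*(d:ℝ)/(((s.sup j₀ : ℕ) : ℝ)+1) := by positivity
        rw [hg]
        simp only
        push_cast at hAJ ⊢
        have hpos' : (0:ℝ) ≤ 2^(2*d+1)*(d:ℝ)/(J:ℝ) := by positivity
        linarith

theorem stmt8 {d : ℕ} (hd : 1 ≤ d) (δ : ℝ) (hδ : δ ∈ Set.Ioc (0 : ℝ) 1)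
    (a : ℝ) (ha : a = δ * 2 ^ (-(2 * (d : ℤ)) - 1) / (d + 1))
    (w : (Fin d → ℝ) → ℝ)
    (hw : ∀ η : Fin d → ℝ, w η = if ‖η‖ < 1 / 2 then a else ‖η‖ ^ (d + 1))
    (ξ : Fin d → ℝ) :
    w ξ * ∑' ℓ : Fin d → ℤ,
        (if ℓ = 0 then 0 else 1 / w (ξ - fun i => (ℓ i : ℝ)))
      ≤ δ + 2 ^ (2 * d + 2) * (d + 1) / δ *
          (if 1 / 2 ≤ ‖ξ‖ then ‖ξ‖ ^ (d + 1) else 0) := by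
  classical
  obtain ⟨hδ0, hδ1⟩ := hδ
  have hdR : (0:ℝ) < (d:ℝ) + 1 := by positivity
  have ha0 : 0 < a := by rw [ha]; positivity
  have hw0 : ∀ η, 0 ≤ w η := by
    intro η
    rw [hw]
    split
    · exact le_of_lt ha0
    · positivity
  set f : (Fin d → ℤ) → ℝ :=
    fun ℓ => if ℓ = 0 then 0 else 1 / w (ξ - fun i => (ℓ i : ℝ)) with hf
  set B : ℝ := (if 1/2 ≤ ‖ξ‖ then 1/a else 0) + 2^(2*d+1)*((d:ℝ)+1) with hB
  have hB0 : 0 ≤ B := by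
    rw [hB]
    have h1 : (0:ℝ) ≤ (if 1/2 ≤ ‖ξ‖ then 1/a else 0) := by
      split
      · positivity
      · exact le_refl 0
    have h2 : (0:ℝ) ≤ 2^(2*d+1)*((d:ℝ)+1) := by positivity
    linarith
  -- partial sums bounded by B
  have hpart : ∀ t : Finset (Fin d → ℤ), ∑ ℓ ∈ t, f ℓ ≤ B := by
    intro t
    have h1 : ∑ ℓ ∈ t.filter (fun ℓ => ℓ ≠ 0), f ℓ = ∑ ℓ ∈ t, f ℓ := by
      apply Finset.sum_filter_of_ne
      intro x _ hx
      intro h0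
      apply hx
      rw [hf]
      simp [h0]
    rw [← h1]
    set t' := t.filter (fun ℓ => ℓ ≠ 0) with ht'
    have ht'0 : ∀ ℓ ∈ t', ℓ ≠ 0 := by
      intro ℓ hℓ
      rw [ht', Finset.mem_filter] at hℓ
      exact hℓ.2
    rw [← Finset.sum_filter_add_sum_filter_not t'
      (fun ℓ => ‖ξ - fun i => ((ℓ i : ℝ))‖ < 1/2) f]
    set t1 := t'.filter (fun ℓ => ‖ξ - fun i => ((ℓ i : ℝ))‖ < 1/2) with ht1
    set t2 := t'.filter (fun ℓ => ¬ ‖ξ - fun i => ((ℓ i : ℝ))‖ < 1/2) with ht2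
    have hs1 : ∑ ℓ ∈ t1, f ℓ ≤ (if 1/2 ≤ ‖ξ‖ then 1/a else 0) := by
      rcases Finset.eq_empty_or_nonempty t1 with he | ⟨ℓ₀, hℓ₀⟩
      · rw [he, Finset.sum_empty]
        split
        · positivity
        · exact le_refl 0
      · have hmem : ∀ ℓ ∈ t1, ℓ ≠ 0 ∧ ‖ξ - fun i => ((ℓ i : ℝ))‖ < 1/2 := by
          intro ℓ hℓ
          rw [ht1, Finset.mem_filter] at hℓ
          exact ⟨ht'0 ℓ hℓ.1, hℓ.2⟩
        -- indicator is 1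
        have hind : 1/2 ≤ ‖ξ‖ := by
          obtain ⟨h0, hne⟩ := hmem ℓ₀ hℓ₀
          obtain ⟨i, hi⟩ := Function.ne_iff.mp h0
          have h1i : (1:ℝ) ≤ |((ℓ₀ i : ℝ))| := by
            have : 1 ≤ |ℓ₀ i| := Int.one_le_abs (by simpa using hi)
            calc (1:ℝ) = ((1:ℤ):ℝ) := by norm_num
              _ ≤ ((|ℓ₀ i| : ℤ) : ℝ) := by exact_mod_cast this
              _ = |((ℓ₀ i : ℝ))| := by push_cast; rfl
          have hxi : |ξ i - (ℓ₀ i : ℝ)| < 1/2 := by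
            have := norm_le_pi_norm (ξ - fun i => ((ℓ₀ i : ℝ))) i
            simp only [Pi.sub_apply, Real.norm_eq_abs] at this
            linarith
          have hξi : |ξ i| ≤ ‖ξ‖ := by
            have := norm_le_pi_norm ξ i
            simpa [Real.norm_eq_abs] using this
          have : |((ℓ₀ i:ℝ))| - |ξ i - (ℓ₀ i : ℝ)| ≤ |ξ i| := by
            have := abs_sub_abs_le_abs_sub ((ℓ₀ i : ℝ)) (ξ i)
            have h2 : |(ℓ₀ i : ℝ) - ξ i| = |ξ i - (ℓ₀ i : ℝ)| := abs_sub_comm _ _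
            linarith [abs_sub_abs_le_abs_sub ((ℓ₀ i:ℝ)) (ξ i), abs_nonneg (ξ i)]
          linarith
        rw [if_pos hind]
        -- card ≤ 1
        have hcard : t1.card ≤ 1 := by
          rw [Finset.card_le_one]
          intro x hx y hy
          obtain ⟨_, hxn⟩ := hmem x hx
          obtain ⟨_, hyn⟩ := hmem y hy
          funext i
          have hxi : |ξ i - (x i : ℝ)| < 1/2 := by
            have := norm_le_pi_norm (ξ - fun i => ((x i : ℝ))) i
            simp only [Pi.sub_apply, Real.norm_eq_abs] at this
            linarith
          have hyi : |ξ i - (y i : ℝ)| < 1/2 := by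
            have := norm_le_pi_norm (ξ - fun i => ((y i : ℝ))) i
            simp only [Pi.sub_apply, Real.norm_eq_abs] at this
            linarith
          have : |((x i - y i : ℤ) : ℝ)| < 1 := by
            push_cast
            calc |((x i:ℝ)) - (y i:ℝ)| = |(ξ i - (y i:ℝ)) - (ξ i - (x i:ℝ))| := by ring_nf
              _ ≤ |ξ i - (y i:ℝ)| + |ξ i - (x i:ℝ)| := abs_sub _ _
              _ < 1 := by linarith
          have : |x i - y i| < 1 := by exact_mod_cast this
          have := Int.abs_lt_one_iff.mp this
          linarith [this]
        -- each term equals 1/a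
        have hval : ∀ ℓ ∈ t1, f ℓ = 1/a := by
          intro ℓ hℓ
          obtain ⟨h0, hne⟩ := hmem ℓ hℓ
          rw [hf]
          simp only [h0, if_false]
          rw [hw, if_pos hne]
        calc ∑ ℓ ∈ t1, f ℓ = ∑ ℓ ∈ t1, 1/a := Finset.sum_congr rfl hval
          _ = t1.card * (1/a) := by rw [Finset.sum_const, nsmul_eq_mul]
          _ ≤ 1 * (1/a) := by
              apply mul_le_mul_of_nonneg_right _ (by positivity)
              exact_mod_cast hcard
          _ = 1/a := one_mul _
    have hs2 : ∑ ℓ ∈ t2, f ℓ ≤ 2^(2*d+1)*((d:ℝ)+1) := by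
      have hge : ∀ ℓ ∈ t2, (1:ℝ)/2 ≤ ‖ξ - fun i => ((ℓ i : ℝ))‖ := by
        intro ℓ hℓ
        rw [ht2, Finset.mem_filter] at hℓ
        linarith [not_lt.mp hℓ.2]
      have hval : ∀ ℓ ∈ t2, f ℓ = 1/‖ξ - fun i => ((ℓ i : ℝ))‖^(d+1) := by
        intro ℓ hℓ
        have hℓ' := hℓ
        rw [ht2, Finset.mem_filter] at hℓ'
        rw [hf]
        simp only [ht'0 ℓ hℓ'.1, if_false]
        rw [hw, if_neg hℓ'.2]
      rw [Finset.sum_congr rfl hval]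
      exact my_lattice hd ξ t2 hge
    rw [hB]
    linarith
  have htsum : ∑' ℓ, f ℓ ≤ B := tsum_le_of_sum_le' hB0 hpart
  have hfnn : ∀ ℓ, 0 ≤ f ℓ := by
    intro ℓ
    by_cases h0 : ℓ = 0
    · simp [hf, h0]
    · simp only [hf, h0, if_false]
      exact one_div_nonneg.mpr (hw0 _)
  have htsum0 : 0 ≤ ∑' ℓ, f ℓ := tsum_nonneg hfnn
  -- final case split
  by_cases hξ : ‖ξ‖ < 1/2
  · have hind : ¬ (1/2 ≤ ‖ξ‖) := not_le.mpr hξ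
    rw [if_neg hind, mul_zero, add_zero]
    have hwξ : w ξ = a := by rw [hw, if_pos hξ]
    rw [hwξ]
    have hBval : B = 2^(2*d+1)*((d:ℝ)+1) := by rw [hB, if_neg hind, zero_add]
    have haB : a * B = δ := by
      have hz : (2:ℝ)^(-(2*(d:ℤ))-1) * 2^(2*d+1) = 1 := by
        rw [show ((2:ℝ)^(2*d+1) : ℝ) = (2:ℝ)^(((2*d+1 : ℕ)) : ℤ) from (zpow_natCast 2 (2*d+1)).symm,
          ← zpow_add₀ (by norm_num : (2:ℝ) ≠ 0),
          show (-(2*(d:ℤ))-1) + ((2*d+1 : ℕ):ℤ) = 0 by push_cast; ring, zpow_zero]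
      have h1z : (2:ℝ)^(-(2*(d:ℤ))-1) = 1/(2:ℝ)^(2*d+1) := eq_one_div_of_mul_eq_one_left hz
      have hYne : ((2:ℝ)^(2*d+1)) ≠ 0 := by positivity
      have hdne : ((d:ℝ)+1) ≠ 0 := ne_of_gt hdR
      rw [hBval, ha, h1z]
      field_simp
    calc a * ∑' ℓ, f ℓ ≤ a * B := mul_le_mul_of_nonneg_left htsum (le_of_lt ha0)
      _ = δ := haB
  · have hind : 1/2 ≤ ‖ξ‖ := not_lt.mp hξ
    rw [if_pos hind]
    have hwξ : w ξ = ‖ξ‖^(d+1) := by rw [hw, if_neg hξ]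
    have hinva : 1/a = 2^(2*d+1)*((d:ℝ)+1)/δ := by
      have hz : (2:ℝ)^(-(2*(d:ℤ))-1) * 2^(2*d+1) = 1 := by
        rw [show ((2:ℝ)^(2*d+1) : ℝ) = (2:ℝ)^(((2*d+1 : ℕ)) : ℤ) from (zpow_natCast 2 (2*d+1)).symm,
          ← zpow_add₀ (by norm_num : (2:ℝ) ≠ 0),
          show (-(2*(d:ℤ))-1) + ((2*d+1 : ℕ):ℤ) = 0 by push_cast; ring, zpow_zero]
      have h1z : (2:ℝ)^(-(2*(d:ℤ))-1) = 1/(2:ℝ)^(2*d+1) := eq_one_div_of_mul_eq_one_left hz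
      have hYne : ((2:ℝ)^(2*d+1)) ≠ 0 := by positivity
      have hdne : ((d:ℝ)+1) ≠ 0 := ne_of_gt hdR
      rw [ha, h1z]
      rw [one_div_div]
      field_simp
    have hBle : B ≤ 2^(2*d+2)*((d:ℝ)+1)/δ := by
      rw [hB, if_pos hind, hinva]
      have h1 : 2^(2*d+1)*((d:ℝ)+1) ≤ 2^(2*d+1)*((d:ℝ)+1)/δ := by
        rw [le_div_iff₀ hδ0]
        nlinarith [mul_pos (pow_pos (by norm_num : (0:ℝ) < 2) (2*d+1)) hdR, hδ1, hδ0]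
      have h2 : (2:ℝ)^(2*d+2) = 2 * 2^(2*d+1) := by ring
      rw [h2]
      have : 2^(2*d+1)*((d:ℝ)+1)/δ + 2^(2*d+1)*((d:ℝ)+1)/δ = 2*2^(2*d+1)*((d:ℝ)+1)/δ := by
        ring
      linarith
    have hwξ0 : 0 ≤ w ξ := hw0 ξ
    calc w ξ * ∑' ℓ, f ℓ ≤ w ξ * B := mul_le_mul_of_nonneg_left htsum hwξ0
      _ ≤ w ξ * (2^(2*d+2)*((d:ℝ)+1)/δ) := mul_le_mul_of_nonneg_left hBle hwξ0
      _ = 2^(2*d+2)*((d:ℝ)+1)/δ * ‖ξ‖^(d+1) := by rw [hwξ]; ring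
      _ ≤ δ + 2^(2*d+2)*((d:ℝ)+1)/δ * ‖ξ‖^(d+1) := by linarith
end

section
/- Let W: ℝ → [1,∞) be even, nondecreasing on [0,∞), with W(t) = 1 for t ∈ [0,t*] for some t* > 0, and with C_W := 1/t* + ∫₀^∞ (ln W(t))/t² dt < ∞. For each nonnegative integer j, let t_j := inf{t ≥ t* : ln W(t) ≥ j} (assumed finite for all j). Then ∑_{j=0}^∞ 1/t_j ≤ C_W. -/
open MeasureTheory

theorem stmt9 (W : ℝ → ℝ) (tstar : ℝ) (htstar : 0 < tstar)
    (hW1 : ∀ t, 1 ≤ W t)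
    (hWeven : ∀ t, W (-t) = W t)
    (hWmono : MonotoneOn W (Set.Ici (0 : ℝ)))
    (hWflat : ∀ t ∈ Set.Icc (0 : ℝ) tstar, W t = 1)
    (hWint : IntegrableOn (fun t => Real.log (W t) / t ^ 2) (Set.Ioi (0 : ℝ)))
    (t : ℕ → ℝ)
    (hne : ∀ j : ℕ, {s : ℝ | tstar ≤ s ∧ (j : ℝ) ≤ Real.log (W s)}.Nonempty)
    (ht : ∀ j : ℕ, t j = sInf {s : ℝ | tstar ≤ s ∧ (j : ℝ) ≤ Real.log (W s)}) :
    ∑' j : ℕ, 1 / t j ≤ 1 / tstar + ∫ s in Set.Ioi (0 : ℝ), Real.log (W s) / s ^ 2 := by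
  have hlognn : ∀ s, (0:ℝ) ≤ Real.log (W s) := fun s => Real.log_nonneg (hW1 s)
  have htge : ∀ j, tstar ≤ t j := by
    intro j; rw [ht j]; exact le_csInf (hne j) (fun s hs => hs.1)
  have htpos : ∀ j, 0 < t j := fun j => lt_of_lt_of_le htstar (htge j)
  have hkey : ∀ (j : ℕ) (s : ℝ), t j < s → (j : ℝ) ≤ Real.log (W s) := by
    intro j s hs
    rw [ht j] at hs
    obtain ⟨s', hs', hlt⟩ := exists_lt_of_csInf_lt (hne j) hs
    have h0 : (0:ℝ) ≤ s' := le_trans htstar.le hs'.1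
    have hWle : W s' ≤ W s := hWmono h0 (le_trans h0 hlt.le) hlt.le
    calc (j:ℝ) ≤ Real.log (W s') := hs'.2
      _ ≤ Real.log (W s) := Real.log_le_log (lt_of_lt_of_le one_pos (hW1 s')) hWle
  have hInn : ∀ s : ℝ, 0 ≤ Real.log (W s) / s ^ 2 :=
    fun s => div_nonneg (hlognn s) (sq_nonneg s)
  have hIpos : 0 ≤ ∫ s in Set.Ioi (0:ℝ), Real.log (W s) / s ^ 2 :=
    setIntegral_nonneg measurableSet_Ioi (fun s _ => hInn s)
  have hIntPow : ∀ a : ℝ, 0 < a → IntegrableOn (fun s : ℝ => (s ^ 2)⁻¹) (Set.Ioi a) := by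
    intro a ha
    have h := integrableOn_Ioi_rpow_of_lt (by norm_num : (-2:ℝ) < -1) ha
    refine h.congr_fun (fun x hx => ?_) measurableSet_Ioi
    beta_reduce
    rw [Real.rpow_neg (le_of_lt (ha.trans hx)), ← Real.rpow_natCast x 2]
    norm_num
  have hgint : ∀ j, IntegrableOn
      ((Set.Ioi (t j)).indicator (fun s : ℝ => (s ^ 2)⁻¹)) (Set.Ioi (0:ℝ)) := by
    intro j
    have h1 : IntegrableOn (fun s : ℝ => (s ^ 2)⁻¹) (Set.Ioi (t j))
        (volume.restrict (Set.Ioi (0:ℝ))) := by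
      rw [IntegrableOn, Measure.restrict_restrict measurableSet_Ioi, Set.Ioi_inter_Ioi,
        max_eq_left (htpos j).le]
      exact hIntPow _ (htpos j)
    exact (integrable_indicator_iff measurableSet_Ioi).2 h1
  have hgval : ∀ j, ∫ s in Set.Ioi (0:ℝ),
      (Set.Ioi (t j)).indicator (fun s : ℝ => (s ^ 2)⁻¹) s = (t j)⁻¹ := by
    intro j
    rw [setIntegral_indicator measurableSet_Ioi, Set.Ioi_inter_Ioi,
      max_eq_right (htpos j).le]
    have h1 : ∫ s in Set.Ioi (t j), (s ^ 2)⁻¹ = ∫ s in Set.Ioi (t j), s ^ (-2:ℝ) := by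
      refine setIntegral_congr_fun measurableSet_Ioi (fun x hx => ?_)
      rw [Real.rpow_neg (le_of_lt ((htpos j).trans hx)), ← Real.rpow_natCast x 2]
      norm_num
    rw [h1, integral_Ioi_rpow_of_lt (by norm_num) (htpos j)]
    rw [show (-2:ℝ) + 1 = -1 by norm_num, Real.rpow_neg_one]
    field_simp
  have hptwise : ∀ N : ℕ, ∀ s ∈ Set.Ioi (0:ℝ),
      ∑ j ∈ Finset.Icc 1 N, (Set.Ioi (t j)).indicator (fun s : ℝ => (s ^ 2)⁻¹) s
        ≤ Real.log (W s) / s ^ 2 := by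
    intro N s hs
    set m := ⌊Real.log (W s)⌋₊ with hm
    have hsub : (Finset.Icc 1 N).filter (fun j => t j < s) ⊆ Finset.Icc 1 m := by
      intro j hj
      rw [Finset.mem_filter] at hj
      obtain ⟨hj1, hj2⟩ := hj
      rw [Finset.mem_Icc] at hj1 ⊢
      exact ⟨hj1.1, Nat.le_floor (hkey j s hj2)⟩
    calc ∑ j ∈ Finset.Icc 1 N, (Set.Ioi (t j)).indicator (fun s : ℝ => (s ^ 2)⁻¹) s
        = ∑ j ∈ Finset.Icc 1 N, (if t j < s then (s ^ 2)⁻¹ else 0) := by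
          refine Finset.sum_congr rfl (fun j _ => ?_)
          simp [Set.indicator_apply, Set.mem_Ioi]
      _ = ∑ j ∈ (Finset.Icc 1 N).filter (fun j => t j < s), (s ^ 2)⁻¹ :=
          (Finset.sum_filter _ _).symm
      _ = ((Finset.Icc 1 N).filter (fun j => t j < s)).card * (s ^ 2)⁻¹ := by
          rw [Finset.sum_const, nsmul_eq_mul]
      _ ≤ (m : ℝ) * (s ^ 2)⁻¹ := by
          refine mul_le_mul_of_nonneg_right ?_ (by positivity)
          have := Finset.card_le_card hsub
          rw [Nat.card_Icc] at this
          exact_mod_cast le_trans this (by omega)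
      _ ≤ Real.log (W s) * (s ^ 2)⁻¹ :=
          mul_le_mul_of_nonneg_right (Nat.floor_le (hlognn s)) (by positivity)
      _ = Real.log (W s) / s ^ 2 := (div_eq_mul_inv _ _).symm
  have hmain : ∀ n : ℕ, ∑ j ∈ Finset.range n, 1 / t j
      ≤ 1 / tstar + ∫ s in Set.Ioi (0:ℝ), Real.log (W s) / s ^ 2 := by
    intro n
    cases n with
    | zero => simp; positivity
    | succ N =>
      have hsplit : Finset.range (N + 1) = insert 0 (Finset.Icc 1 N) := by
        ext x; simp [Nat.lt_succ_iff]; omega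
      rw [hsplit, Finset.sum_insert (by simp)]
      have h0 : 1 / t 0 ≤ 1 / tstar := one_div_le_one_div_of_le htstar (htge 0)
      have hrest : ∑ j ∈ Finset.Icc 1 N, 1 / t j
          ≤ ∫ s in Set.Ioi (0:ℝ), Real.log (W s) / s ^ 2 := by
        have heq : ∑ j ∈ Finset.Icc 1 N, 1 / t j
            = ∫ s in Set.Ioi (0:ℝ), ∑ j ∈ Finset.Icc 1 N,
                (Set.Ioi (t j)).indicator (fun s : ℝ => (s ^ 2)⁻¹) s := by
          rw [integral_finset_sum _ (fun j _ => hgint j)]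
          refine Finset.sum_congr rfl (fun j _ => ?_)
          rw [hgval j, one_div]
        rw [heq]
        exact setIntegral_mono_on
          (integrable_finset_sum _ (fun j _ => hgint j)) hWint
          measurableSet_Ioi (hptwise N)
      linarith
  exact Real.tsum_le_of_sum_range_le (fun n => one_div_nonneg.2 (htpos n).le) hmain
end

section
/- Let c > 0 and let (t_j)_{j≥0} be a sequence of positive reals with ∑_{j=0}^∞ 1/t_j < ∞. The infinite product F(ξ) := ∏_{j=0}^∞ (sin(c t_j⁻¹ π ξ)/(c t_j⁻¹ π ξ))² (with each factor interpreted as 1 at ξ = 0) converges pointwise for every ξ ∈ ℝ, and the partial products converge in L¹(ℝ). -/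
open MeasureTheory Filter Real

/-- The `j`-th factor of the infinite product, interpreted as `1` at `ξ = 0`. -/
noncomputable def factor (c : ℝ) (t : ℕ → ℝ) (j : ℕ) (ξ : ℝ) : ℝ :=
  if ξ = 0 then 1
  else (Real.sin (c * (t j)⁻¹ * Real.pi * ξ) / (c * (t j)⁻¹ * Real.pi * ξ)) ^ 2

/-! Every factor is `sinc² ∈ [0, 1]`, so the partial products decrease pointwise to their
infimum, and from the first factor on they are dominated by the integrable function
`ξ ↦ sinc² (c t₀⁻¹ π ξ)`; dominated convergence then gives convergence in `L¹`. -/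

open Topology

theorem integrable_iInf_and_tendsto_integral_abs_sub_iInf_of_antitone {α : Type*}
    [MeasurableSpace α] {μ : Measure α} {f : ℕ → α → ℝ}
    (hf : ∀ n, AEStronglyMeasurable (f n) μ) (hf_nonneg : ∀ n x, 0 ≤ f n x)
    (hf_anti : ∀ x, Antitone (f · x)) {N : ℕ} (hN : Integrable (f N) μ) :
    Integrable (fun x => ⨅ n, f n x) μ ∧
      Tendsto (fun n => ∫ x, |f n x - ⨅ m, f m x| ∂μ) atTop (𝓝 0) := by
  have hbdd : ∀ x, BddBelow (Set.range (f · x)) := fun x =>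
    ⟨0, Set.forall_mem_range.2 (hf_nonneg · x)⟩
  have hlim : ∀ x, Tendsto (f · x) atTop (𝓝 (⨅ n, f n x)) := fun x =>
    tendsto_atTop_ciInf (hf_anti x) (hbdd x)
  have hle : ∀ n x, ⨅ m, f m x ≤ f n x := fun n x => ciInf_le (hbdd x) n
  have hinf_nonneg : ∀ x, 0 ≤ ⨅ n, f n x := fun x => le_ciInf fun n => hf_nonneg n x
  have hinf_meas : AEStronglyMeasurable (fun x => ⨅ n, f n x) μ :=
    aestronglyMeasurable_of_tendsto_ae atTop hf (ae_of_all _ hlim)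
  refine ⟨hN.mono' hinf_meas (ae_of_all _ fun x => ?_), ?_⟩
  · rw [Real.norm_of_nonneg (hinf_nonneg x)]
    exact hle N x
  have h := tendsto_integral_filter_of_dominated_convergence
    (F := fun n x => |f n x - ⨅ m, f m x|) (f N)
    (Eventually.of_forall fun n => by have := hf n; fun_prop)
    (eventually_atTop.2 ⟨N, fun n hn => ae_of_all _ fun x => by
      rw [Real.norm_eq_abs, abs_abs, abs_of_nonneg (sub_nonneg.2 (hle n x))]
      linarith [hinf_nonneg x, hf_anti x hn]⟩)
    hN (ae_of_all _ fun x => by simpa using ((hlim x).sub_const (⨅ n, f n x)).abs)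
  simpa using h

theorem antitone_prod_range_of_nonneg_of_le_one {g : ℕ → ℝ} (hg_nonneg : ∀ j, 0 ≤ g j)
    (hg_le_one : ∀ j, g j ≤ 1) : Antitone fun M => ∏ j ∈ Finset.range M, g j :=
  antitone_nat_of_succ_le fun M => by
    rw [Finset.prod_range_succ]
    exact mul_le_of_le_one_right (Finset.prod_nonneg fun j _ => hg_nonneg j) (hg_le_one M)

theorem Real.sinc_sq_mul_one_add_sq_le_two (x : ℝ) : sinc x ^ 2 * (1 + x ^ 2) ≤ 2 := by
  have h₁ : sinc x ^ 2 ≤ 1 := by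
    rw [sq_le_one_iff_abs_le_one]
    exact abs_sinc_le_one x
  have h₂ : sinc x ^ 2 * x ^ 2 ≤ 1 := by
    rcases eq_or_ne x 0 with rfl | hx
    · simp
    rw [sinc_of_ne_zero hx, div_pow, div_mul_cancel₀ _ (pow_ne_zero 2 hx)]
    exact sin_sq_le_one x
  linarith

theorem Real.integrable_sinc_sq : Integrable fun x => sinc x ^ 2 := by
  refine (integrable_inv_one_add_sq.const_mul 2).mono' (by fun_prop) (ae_of_all _ fun x => ?_)
  rw [Real.norm_of_nonneg (sq_nonneg _), ← div_eq_mul_inv, le_div_iff₀ (by positivity)]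
  exact sinc_sq_mul_one_add_sq_le_two x

theorem factor_eq_sinc_sq {c : ℝ} {t : ℕ → ℝ} {j : ℕ} (hc : c ≠ 0) (ht : t j ≠ 0) :
    factor c t j = fun ξ => sinc (c * (t j)⁻¹ * π * ξ) ^ 2 := by
  ext ξ
  rcases eq_or_ne ξ 0 with rfl | hξ
  · simp [factor]
  · have : c * (t j)⁻¹ * π * ξ ≠ 0 := by simp [hc, ht, hξ, pi_ne_zero]
    simp [factor, hξ, sinc_of_ne_zero this]

theorem stmt10_general (c : ℝ) (hc : 0 < c) (t : ℕ → ℝ) (ht : ∀ j, 0 < t j) :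
    (∀ ξ : ℝ, ∃ L : ℝ,
        Tendsto (fun M : ℕ => ∏ j ∈ Finset.range M, factor c t j ξ) atTop (nhds L)) ∧
      ∃ F : ℝ → ℝ, Integrable F ∧
        Tendsto (fun M : ℕ => ∫ ξ : ℝ, |(∏ j ∈ Finset.range M, factor c t j ξ) - F ξ|)
          atTop (nhds 0) := by
  have hfactor j := factor_eq_sinc_sq hc.ne' (ht j).ne'
  have hfactor_nonneg j ξ : 0 ≤ factor c t j ξ := by rw [hfactor]; positivity
  have hprod_nonneg M ξ : 0 ≤ ∏ j ∈ Finset.range M, factor c t j ξ :=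
    Finset.prod_nonneg fun j _ => hfactor_nonneg j ξ
  have hprod_anti ξ : Antitone fun M => ∏ j ∈ Finset.range M, factor c t j ξ :=
    antitone_prod_range_of_nonneg_of_le_one (hfactor_nonneg · ξ) fun j => by
      rw [hfactor, sq_le_one_iff_abs_le_one]
      exact abs_sinc_le_one _
  have hprod_meas M : AEStronglyMeasurable (fun ξ => ∏ j ∈ Finset.range M, factor c t j ξ) :=
    Finset.aestronglyMeasurable_fun_prod _ fun j _ => by rw [hfactor]; fun_prop
  have hprod_one : Integrable fun ξ => ∏ j ∈ Finset.range 1, factor c t j ξ := by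
    simp only [Finset.prod_range_one, hfactor]
    exact integrable_sinc_sq.comp_mul_left' (by have := ht 0; positivity)
  obtain ⟨hF, hL1⟩ := integrable_iInf_and_tendsto_integral_abs_sub_iInf_of_antitone
    hprod_meas hprod_nonneg hprod_anti hprod_one
  refine ⟨fun ξ => ⟨_, tendsto_atTop_ciInf (hprod_anti ξ) ?_⟩, _, hF, hL1⟩
  exact ⟨0, Set.forall_mem_range.2 (hprod_nonneg · ξ)⟩

theorem stmt10 (c : ℝ) (hc : 0 < c) (t : ℕ → ℝ) (ht : ∀ j, 0 < t j)
    (hsum : Summable fun j => 1 / t j) :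
    (∀ ξ : ℝ, ∃ L : ℝ,
        Tendsto (fun M : ℕ => ∏ j ∈ Finset.range M, factor c t j ξ) atTop (nhds L)) ∧
      ∃ F : ℝ → ℝ, Integrable F ∧
        Tendsto (fun M : ℕ => ∫ ξ : ℝ, |(∏ j ∈ Finset.range M, factor c t j ξ) - F ξ|)
          atTop (nhds 0) :=
  stmt10_general c hc t ht
end

section
/- (Overlap of dilated tiles of similar shape) Fix 𝒞 > 1, r > 0, t ≥ 1, ξ ∈ ℝ^d. Let D₀ ∈ GL_d(ℝ), and let (D_i, ξ_i), i = 1,…,N, be tiles such that: (a) d(D_i, D₀) := log₂ max{|D_i⁻¹D₀|, |D₀⁻¹D_i|} < r for all i; (b) ξ ∈ {η : |D_i⁻¹(η − ξ_i)|_∞ ≤ t/2} for all i; (c) for a.e. η ∈ ℝ^d, at most 𝒞 of the sets {η' : |D_i⁻¹(η'−ξ_i)|_∞ ≤ 1/2} contain η. Then N ≤ 𝒞 (2^{2r+1} t)^d. -/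
open MeasureTheory Metric Set
open scoped ENNReal


/-- The ℓ∞ → ℓ∞ operator norm of a d×d real matrix. -/
noncomputable def opN {d : ℕ} (A : Matrix (Fin d) (Fin d) ℝ) : ℝ :=
  ‖(Matrix.mulVecLin A).toContinuousLinearMap‖

/-- The tile geometry distance d(D₁,D₂) = log₂ max(|D₁⁻¹D₂|, |D₂⁻¹D₁|). -/
noncomputable def tileDist {d : ℕ} (D₁ D₂ : Matrix (Fin d) (Fin d) ℝ) : ℝ :=
  Real.logb 2 (max (opN (D₁⁻¹ * D₂)) (opN (D₂⁻¹ * D₁)))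


lemma opN_nonneg {d : ℕ} (A : Matrix (Fin d) (Fin d) ℝ) : 0 ≤ opN A := norm_nonneg _

lemma mulVec_norm_le {d : ℕ} (A : Matrix (Fin d) (Fin d) ℝ) (x : Fin d → ℝ) :
    ‖A.mulVec x‖ ≤ opN A * ‖x‖ := by
  have := (Matrix.mulVecLin A).toContinuousLinearMap.le_opNorm x
  simpa [opN] using this

lemma abs_det_le_opN_pow {d : ℕ} (A : Matrix (Fin d) (Fin d) ℝ) :
    |A.det| ≤ opN A ^ d := by
  have hκ0 : volume (closedBall (0 : Fin d → ℝ) 1) ≠ 0 :=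
    (measure_closedBall_pos volume _ one_pos).ne'
  have hκt : volume (closedBall (0 : Fin d → ℝ) 1) ≠ ⊤ :=
    measure_closedBall_lt_top.ne
  have h1 : (Matrix.mulVecLin A) '' closedBall 0 1 ⊆ closedBall 0 (opN A) := by
    rintro _ ⟨x, hx, rfl⟩
    simp only [mem_closedBall_zero_iff] at *
    calc ‖Matrix.mulVecLin A x‖ = ‖A.mulVec x‖ := by rw [Matrix.mulVecLin_apply]
    _ ≤ opN A * ‖x‖ := mulVec_norm_le A x
    _ ≤ opN A * 1 := by nlinarith [opN_nonneg A, norm_nonneg x]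
    _ = opN A := mul_one _
  have hball := measure_mono (μ := volume) h1
  rw [Measure.addHaar_image_linearMap volume (Matrix.mulVecLin A) (closedBall 0 1),
    Measure.addHaar_closedBall' volume _ (opN_nonneg A)] at hball
  have hdet : LinearMap.det (Matrix.mulVecLin A) = A.det := by
    rw [← Matrix.toLin'_apply', LinearMap.det_toLin']
  rw [hdet, Module.finrank_fintype_fun_eq_card, Fintype.card_fin] at hball
  rw [ENNReal.mul_le_mul_iff_left hκ0 hκt] at hball
  exact (ENNReal.ofReal_le_ofReal_iff (pow_nonneg (opN_nonneg A) d)).mp hball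

lemma opN_pos {d : ℕ} (hd : 1 ≤ d) {A : Matrix (Fin d) (Fin d) ℝ} (hA : IsUnit A.det) :
    0 < opN A := by
  rcases (opN_nonneg A).lt_or_eq with h | h
  · exact h
  exfalso
  have hz : ∀ x, A.mulVec x = 0 := fun x =>
    norm_le_zero_iff.mp (by simpa [← h] using mulVec_norm_le A x)
  have hA0 : A = 0 := by
    ext i j
    have := congrFun (hz (Pi.single j 1)) i
    simpa [Matrix.mulVec_single] using this
  have : Nonempty (Fin d) := ⟨⟨0, hd⟩⟩
  rw [hA0, Matrix.det_zero] at hA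
  simp at hA

lemma opN_lt_of_tileDist {d : ℕ} (hd : 1 ≤ d) {D₁ D₀ : Matrix (Fin d) (Fin d) ℝ}
    (h1 : IsUnit D₁.det) (h0 : IsUnit D₀.det) {r : ℝ} (h : tileDist D₁ D₀ < r) :
    opN (D₁⁻¹ * D₀) < 2 ^ r ∧ opN (D₀⁻¹ * D₁) < 2 ^ r := by
  have hu1 : IsUnit (D₁⁻¹ * D₀).det := by
    rw [Matrix.det_mul]; exact (Matrix.isUnit_nonsing_inv_det _ h1).mul h0
  have hu0 : IsUnit (D₀⁻¹ * D₁).det := by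
    rw [Matrix.det_mul]; exact (Matrix.isUnit_nonsing_inv_det _ h0).mul h1
  have hp : 0 < max (opN (D₁⁻¹ * D₀)) (opN (D₀⁻¹ * D₁)) :=
    lt_max_of_lt_left (opN_pos hd hu1)
  rw [tileDist, Real.logb_lt_iff_lt_rpow one_lt_two hp, max_lt_iff] at h
  exact h

lemma tile_measurable {d : ℕ} (A : Matrix (Fin d) (Fin d) ℝ) (c : Fin d → ℝ) (s : ℝ) :
    MeasurableSet {η : Fin d → ℝ | ‖A.mulVec (η - c)‖ ≤ s} := by
  have hcont : Continuous fun η : Fin d → ℝ => A.mulVec (η - c) :=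
    (Matrix.mulVecLin A).toContinuousLinearMap.continuous.comp (continuous_id.sub continuous_const)
  exact (isClosed_le hcont.norm continuous_const).measurableSet

lemma measure_tile {d : ℕ} {A : Matrix (Fin d) (Fin d) ℝ} (hA : IsUnit A.det)
    (c : Fin d → ℝ) (s : ℝ) :
    volume {η : Fin d → ℝ | ‖A⁻¹.mulVec (η - c)‖ ≤ s}
      = ENNReal.ofReal |A.det| * volume (closedBall (0 : Fin d → ℝ) s) := by
  have hdet : LinearMap.det (Matrix.mulVecLin A⁻¹) = (A.det)⁻¹ := by
    rw [← Matrix.toLin'_apply', LinearMap.det_toLin', Matrix.det_nonsing_inv,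
      Ring.inverse_eq_inv']
  have hset : {η : Fin d → ℝ | ‖A⁻¹.mulVec (η - c)‖ ≤ s}
      = (fun η : Fin d → ℝ => η + (-c)) ⁻¹' (Matrix.mulVecLin A⁻¹ ⁻¹' closedBall 0 s) := by
    ext η
    simp [mem_closedBall_zero_iff, sub_eq_add_neg]
  rw [hset, measure_preimage_add_right,
    Measure.addHaar_preimage_linearMap volume
      (by rw [hdet]; exact inv_ne_zero hA.ne_zero) _, hdet, inv_inv]

theorem stmt16 {d : ℕ} (hd : 1 ≤ d) (𝒞 : ℝ) (h𝒞 : 1 < 𝒞) (r : ℝ) (hr : 0 < r)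
    (t : ℝ) (ht : 1 ≤ t) (ξ : Fin d → ℝ)
    (D₀ : Matrix (Fin d) (Fin d) ℝ) (hD₀ : IsUnit D₀.det)
    (N : ℕ) (D : Fin N → Matrix (Fin d) (Fin d) ℝ)
    (hD : ∀ i, IsUnit (D i).det)
    (ξc : Fin N → Fin d → ℝ)
    (hshape : ∀ i, tileDist (D i) D₀ < r)
    (hcontain : ∀ i, ‖(D i)⁻¹.mulVec (ξ - ξc i)‖ ≤ t / 2)
    (hoverlap : ∀ᵐ η : Fin d → ℝ,
      ({i : Fin N | ‖(D i)⁻¹.mulVec (η - ξc i)‖ ≤ 1 / 2}.ncard : ℝ) ≤ 𝒞) :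
    (N : ℝ) ≤ 𝒞 * ((2 : ℝ) ^ (2 * r + 1) * t) ^ d := by
  classical
  set κ := volume (closedBall (0 : Fin d → ℝ) 1) with hκ
  have hκ0 : κ ≠ 0 := (measure_closedBall_pos volume _ one_pos).ne'
  have hκt : κ ≠ ⊤ := measure_closedBall_lt_top.ne
  set p := (2:ℝ) ^ r with hp
  have hp0 : (0:ℝ) < p := Real.rpow_pos_of_pos two_pos r
  set a₀ := |D₀.det| with ha₀
  have ha₀0 : (0:ℝ) < a₀ := abs_pos.mpr hD₀.ne_zero
  set T : Fin N → Set (Fin d → ℝ) :=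
    fun i => {η | ‖(D i)⁻¹.mulVec (η - ξc i)‖ ≤ 1 / 2} with hT
  set B : Set (Fin d → ℝ) := {η | ‖D₀⁻¹.mulVec (η - ξ)‖ ≤ p * t} with hB
  have hTm : ∀ i, MeasurableSet (T i) := fun i => tile_measurable _ _ _
  have hBm : MeasurableSet B := tile_measurable _ _ _
  -- inclusion T i ⊆ B
  have hTB : ∀ i, T i ⊆ B := by
    intro i η hη
    simp only [hT, hB, Set.mem_setOf_eq] at hη ⊢
    have hop := (opN_lt_of_tileDist hd (hD i) hD₀ (hshape i)).2.le
    have h1 : η - ξ = (D i).mulVec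
        ((D i)⁻¹.mulVec (η - ξc i) - (D i)⁻¹.mulVec (ξ - ξc i)) := by
      rw [Matrix.mulVec_sub, Matrix.mulVec_mulVec, Matrix.mulVec_mulVec,
        Matrix.mul_nonsing_inv _ (hD i), Matrix.one_mulVec, Matrix.one_mulVec]
      abel
    have hnorm : ‖(D i)⁻¹.mulVec (η - ξc i) - (D i)⁻¹.mulVec (ξ - ξc i)‖ ≤ 1/2 + t/2 :=
      le_trans (norm_sub_le _ _) (add_le_add hη (hcontain i))
    calc ‖D₀⁻¹.mulVec (η - ξ)‖
        = ‖(D₀⁻¹ * D i).mulVec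
            ((D i)⁻¹.mulVec (η - ξc i) - (D i)⁻¹.mulVec (ξ - ξc i))‖ := by
          rw [h1, Matrix.mulVec_mulVec]
      _ ≤ opN (D₀⁻¹ * D i) * ‖(D i)⁻¹.mulVec (η - ξc i) - (D i)⁻¹.mulVec (ξ - ξc i)‖ :=
          mulVec_norm_le _ _
      _ ≤ p * t := by
          have hn0 : (0:ℝ) ≤ ‖(D i)⁻¹.mulVec (η - ξc i) - (D i)⁻¹.mulVec (ξ - ξc i)‖ :=
            norm_nonneg _
          nlinarith [opN_nonneg (D₀⁻¹ * D i)]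
  -- measures of the tiles and the big box
  have hμT : ∀ i, volume (T i)
      = ENNReal.ofReal |(D i).det| * (ENNReal.ofReal ((1/2:ℝ)^d) * κ) := by
    intro i
    rw [hT, measure_tile (hD i) (ξc i) (1/2),
      Measure.addHaar_closedBall' volume _ (by norm_num : (0:ℝ) ≤ 1/2),
      Module.finrank_fintype_fun_eq_card, Fintype.card_fin, ← hκ]
  have hμB : volume B = ENNReal.ofReal a₀ * (ENNReal.ofReal ((p*t)^d) * κ) := by
    rw [hB, measure_tile hD₀ ξ (p*t),
      Measure.addHaar_closedBall' volume _ (by positivity : (0:ℝ) ≤ p*t),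
      Module.finrank_fintype_fun_eq_card, Fintype.card_fin, ← hκ]
  -- lower bound on |det (D i)|
  have hdetlow : ∀ i, a₀ / p ^ d ≤ |(D i).det| := by
    intro i
    have hop := (opN_lt_of_tileDist hd (hD i) hD₀ (hshape i)).1.le
    have h1 : |((D i)⁻¹ * D₀).det| ≤ p ^ d :=
      le_trans (abs_det_le_opN_pow _) (pow_le_pow_left₀ (opN_nonneg _) hop d)
    have hne : (D i).det ≠ 0 := (hD i).ne_zero
    have h3 : a₀ = |(D i).det| * |((D i)⁻¹ * D₀).det| := by
      rw [ha₀, Matrix.det_mul, Matrix.det_nonsing_inv, Ring.inverse_eq_inv',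
        abs_mul, abs_inv]
      field_simp
    rw [div_le_iff₀ (pow_pos hp0 d)]
    calc a₀ = |(D i).det| * |((D i)⁻¹ * D₀).det| := h3
      _ ≤ |(D i).det| * p ^ d := mul_le_mul_of_nonneg_left h1 (abs_nonneg _)
  -- counting bound, a.e.
  have hcount : ∀ᵐ η : Fin d → ℝ,
      ∑ i, (T i).indicator (1 : (Fin d → ℝ) → ℝ≥0∞) η
        ≤ B.indicator (fun _ => ENNReal.ofReal 𝒞) η := by
    filter_upwards [hoverlap] with η hη
    by_cases hBη : η ∈ B
    · rw [Set.indicator_of_mem hBη]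
      have hcard : ∑ i, (T i).indicator (1 : (Fin d → ℝ) → ℝ≥0∞) η
          = ((Finset.univ.filter (fun i => η ∈ T i)).card : ℝ≥0∞) := by
        rw [← Finset.sum_boole]
        exact Finset.sum_congr rfl (fun i _ => by
          by_cases h : η ∈ T i <;> simp [Set.indicator_apply, h])
      rw [hcard]
      have hncard : ({i : Fin N | ‖(D i)⁻¹.mulVec (η - ξc i)‖ ≤ 1 / 2}.ncard : ℝ)
          = ((Finset.univ.filter (fun i => η ∈ T i)).card : ℝ) := by
        congr 1
        rw [Set.ncard_eq_toFinset_card', Set.toFinset_setOf]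
        rfl
      rw [hncard] at hη
      calc ((Finset.univ.filter (fun i => η ∈ T i)).card : ℝ≥0∞)
          = ENNReal.ofReal ((Finset.univ.filter (fun i => η ∈ T i)).card : ℝ) := by
            rw [ENNReal.ofReal_natCast]
        _ ≤ ENNReal.ofReal 𝒞 := ENNReal.ofReal_le_ofReal hη
    · have hz : ∀ i, η ∉ T i := fun i hi => hBη (hTB i hi)
      simp [Set.indicator_of_notMem, hz, hBη]
  -- integrate
  have hint : ∑ i, volume (T i) ≤ ENNReal.ofReal 𝒞 * volume B := by
    calc ∑ i, volume (T i)
        = ∑ i, ∫⁻ η, (T i).indicator 1 η := by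
          exact Finset.sum_congr rfl fun i _ => (lintegral_indicator_one (hTm i)).symm
      _ = ∫⁻ η, ∑ i, (T i).indicator 1 η :=
          (lintegral_finset_sum _ (fun i _ => measurable_one.indicator (hTm i))).symm
      _ ≤ ∫⁻ η, B.indicator (fun _ => ENNReal.ofReal 𝒞) η := lintegral_mono_ae hcount
      _ = ENNReal.ofReal 𝒞 * volume B := lintegral_indicator_const hBm _
  -- put together in ℝ≥0∞
  have hNle : ENNReal.ofReal ((N:ℝ) * (a₀ / p^d * (1/2:ℝ)^d)) * κ
      ≤ ENNReal.ofReal (𝒞 * (a₀ * (p*t)^d)) * κ := by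
    have hL : ENNReal.ofReal ((N:ℝ) * (a₀ / p^d * (1/2:ℝ)^d)) * κ
        = (N : ℝ≥0∞) * (ENNReal.ofReal (a₀ / p^d) * (ENNReal.ofReal ((1/2:ℝ)^d) * κ)) := by
      rw [ENNReal.ofReal_mul (by positivity), ENNReal.ofReal_mul (by positivity),
        ENNReal.ofReal_natCast]
      ring
    have hR : ENNReal.ofReal (𝒞 * (a₀ * (p*t)^d)) * κ
        = ENNReal.ofReal 𝒞 * (ENNReal.ofReal a₀ * (ENNReal.ofReal ((p*t)^d) * κ)) := by
      rw [ENNReal.ofReal_mul (by positivity), ENNReal.ofReal_mul (by positivity)]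
      ring
    rw [hL, hR]
    calc (N : ℝ≥0∞) * (ENNReal.ofReal (a₀ / p^d) * (ENNReal.ofReal ((1/2:ℝ)^d) * κ))
        = ∑ _i : Fin N, ENNReal.ofReal (a₀ / p^d) * (ENNReal.ofReal ((1/2:ℝ)^d) * κ) := by
          rw [Finset.sum_const, Finset.card_univ, Fintype.card_fin, nsmul_eq_mul]
      _ ≤ ∑ i, volume (T i) := Finset.sum_le_sum fun i _ => by
          rw [hμT i]
          exact mul_le_mul_left (ENNReal.ofReal_le_ofReal (hdetlow i)) _
      _ ≤ ENNReal.ofReal 𝒞 * volume B := hint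
      _ = ENNReal.ofReal 𝒞 * (ENNReal.ofReal a₀ * (ENNReal.ofReal ((p*t)^d) * κ)) := by
          rw [hμB]
  -- back to ℝ
  have key : (N:ℝ) * (a₀ / p^d * (1/2:ℝ)^d) ≤ 𝒞 * (a₀ * (p*t)^d) := by
    rw [ENNReal.mul_le_mul_iff_left hκ0 hκt] at hNle
    exact (ENNReal.ofReal_le_ofReal_iff (by positivity)).mp hNle
  have hfinal : (N:ℝ) ≤ 𝒞 * ((p*p*2) * t)^d := by
    have e1 : (N:ℝ) = ((N:ℝ) * (a₀ / p^d * (1/2:ℝ)^d)) * (p^d * 2^d / a₀) := by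
      field_simp
      rw [mul_assoc, ← mul_pow]; norm_num
    have e2 : 𝒞 * ((p*p*2)*t)^d = (𝒞 * (a₀ * (p*t)^d)) * (p^d * 2^d / a₀) := by
      field_simp
      ring
    rw [e1, e2]
    exact mul_le_mul_of_nonneg_right key (by positivity)
  have h2r : (2:ℝ) ^ (2*r+1) = p*p*2 := by
    rw [hp, Real.rpow_add two_pos, Real.rpow_one, two_mul, Real.rpow_add two_pos]
  rw [h2r]
  exact hfinal
end
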